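/- arXiv:2512.08836 — 2 statements merged into one kernel-verified Lean document; each statement's English description precedes it below -/
import Mathlib

section
/- Let f : X → X be a pointwise periodic homeomorphism of a compact metric space X. Then for the induced hyperspace map 2^f, the set of almost periodic points equals the set of uniformly recurrent points: AP(2^f) = UR(2^f). -/
open TopologicalSpace Metric Set Filter

/-- The induced map on the hyperspace of nonempty compact (= closed) subsets. -/
noncomputable def hyper {X : Type*} [MetricSpace X] (f : X ≃ₜ X) :
    NonemptyCompacts X → NonemptyCompacts X :=
  fun A => ⟨⟨f '' A, A.isCompact.image f.continuous⟩, A.nonempty.image f⟩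

/-- `x` is uniformly recurrent for `g`. -/
def IsUnifRec {α : Type*} [MetricSpace α] (g : α → α) (x : α) : Prop :=
  ∀ ε > (0:ℝ), ∃ N > 0, ∀ k : ℕ, dist (g^[k * N] x) x < ε

/-- `x` is recurrent for `g` (it belongs to its own ω-limit set). -/
def IsRec {α : Type*} [MetricSpace α] (g : α → α) (x : α) : Prop :=
  ∀ ε > (0:ℝ), ∀ m : ℕ, ∃ n ≥ m, 0 < n ∧ dist (g^[n] x) x < ε

/-- `x` is almost periodic for `g`. -/
def IsAP {α : Type*} [MetricSpace α] (g : α → α) (x : α) : Prop :=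
  ∀ ε > (0:ℝ), ∃ N : ℕ, ∀ n : ℕ, ∃ i < N, dist (g^[n + i] x) x < ε

/-- `(x, y)` is an asymptotic pair for `g`. -/
def Asymp {α : Type*} [MetricSpace α] (g : α → α) (x y : α) : Prop :=
  Filter.Tendsto (fun n => dist (g^[n] x) (g^[n] y)) Filter.atTop (nhds 0)

/-- `(x, y)` is a proximal pair for `g`. -/
def Proximal {α : Type*} [MetricSpace α] (g : α → α) (x y : α) : Prop :=
  ∀ ε > (0:ℝ), ∀ m : ℕ, ∃ n ≥ m, dist (g^[n] x) (g^[n] y) < ε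

/-- The ω-limit set of `x` under `g`. -/
def omegaSet {α : Type*} [MetricSpace α] (g : α → α) (x : α) : Set α :=
  {y | ∀ ε > (0:ℝ), ∀ m : ℕ, ∃ n ≥ m, dist (g^[n] x) y < ε}

/-- `M` is a minimal set of `g`. -/
def IsMinimalFor {α : Type*} [TopologicalSpace α] (g : α → α) (M : Set α) : Prop :=
  M.Nonempty ∧ IsClosed M ∧ Set.MapsTo g M M ∧
    ∀ M' ⊆ M, M'.Nonempty → IsClosed M' → Set.MapsTo g M' M' → M' = M

/-- `A` is internally chain transitive for `g`. -/
def ICT {α : Type*} [MetricSpace α] (g : α → α) (A : Set α) : Prop :=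
  ∀ a ∈ A, ∀ b ∈ A, ∀ ε > (0:ℝ), ∃ N : ℕ, 1 ≤ N ∧ ∃ c : ℕ → α,
    c 0 = a ∧ c N = b ∧ (∀ i ≤ N, c i ∈ A) ∧ ∀ i < N, dist (g (c i)) (c (i + 1)) < ε


section AuxiliaryLemmas

set_option linter.unusedSectionVars false

lemma pigeon_aux (G : ℕ) (P : ℕ → ℕ → Prop) (h : ∀ j : ℕ, ∃ i ≤ G, P i j) :
    ∃ i ≤ G, ∀ J : ℕ, ∃ j ≥ J, P i j := by
  by_contra hc
  push_neg at hc
  choose! J hJ using hc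
  set T := (Finset.range (G + 1)).sup J with hT
  obtain ⟨i, hi, hP⟩ := h T
  exact hJ i hi T (Finset.le_sup (by simp [Nat.lt_succ_iff, hi])) hP


section GeneralDynamics
variable {α : Type*} [MetricSpace α] [CompactSpace α]

lemma isAP_mem_closed_invariant {g : α → α} (hg : Continuous g) {x : α} (hx : IsAP g x)
    {Z : Set α} (hZsub : Z ⊆ closure (Set.range fun n : ℕ => g^[n] x))
    (hZne : Z.Nonempty) (hZcl : IsClosed Z) (hZinv : Set.MapsTo g Z Z) : x ∈ Z := by
  obtain ⟨B, hB⟩ := hZne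
  rw [← hZcl.closure_eq, Metric.mem_closure_iff]
  intro ε hε
  obtain ⟨L, hL⟩ := hx (ε / 2) (by positivity)
  have happrox : ∀ j : ℕ, ∃ n : ℕ, dist (g^[n] x) B < 1 / (j + 1) := by
    intro j
    obtain ⟨y, hy, hdy⟩ := Metric.mem_closure_iff.1 (hZsub hB) (1 / (j + 1)) (by positivity)
    obtain ⟨n, rfl⟩ := hy
    exact ⟨n, by rwa [dist_comm]⟩
  choose nj hnj using happrox
  have hap : ∀ j : ℕ, ∃ i ≤ L, i < L ∧ dist (g^[nj j + i] x) x < ε / 2 := by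
    intro j
    obtain ⟨i, hiL, hi⟩ := hL (nj j)
    exact ⟨i, le_of_lt hiL, hiL, hi⟩
  obtain ⟨i, hiL, hfreq⟩ := pigeon_aux L _ hap
  have hci : Continuous (g^[i]) := hg.iterate i
  obtain ⟨δ, hδpos, hδ⟩ := Metric.continuous_iff.1 hci B (ε / 2) (by positivity)
  obtain ⟨J, hJ⟩ := exists_nat_one_div_lt hδpos
  obtain ⟨j, hjJ, -, hjdist⟩ := hfreq J
  have h1 : dist (g^[nj j] x) B < δ := by
    refine lt_of_lt_of_le (hnj j) (le_trans ?_ (le_of_lt hJ))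
    have : (J : ℝ) + 1 ≤ (j : ℝ) + 1 := by exact_mod_cast Nat.succ_le_succ hjJ
    exact one_div_le_one_div_of_le (by positivity) this
  have h2 : dist (g^[i] (g^[nj j] x)) (g^[i] B) < ε / 2 := hδ _ h1
  have h3 : g^[i] (g^[nj j] x) = g^[nj j + i] x := by
    rw [add_comm, Function.iterate_add_apply]
  refine ⟨g^[i] B, hZinv.iterate i hB, ?_⟩
  calc dist x (g^[i] B) ≤ dist x (g^[nj j + i] x) + dist (g^[nj j + i] x) (g^[i] B) :=
        dist_triangle _ _ _
    _ < ε / 2 + ε / 2 := by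
        rw [dist_comm x]
        exact add_lt_add hjdist (by rw [← h3]; exact h2)
    _ = ε := by ring

lemma exists_minimal_invariant {h : α → α} {M : Set α}
    (hMne : M.Nonempty) (hMcl : IsClosed M) (hMinv : Set.MapsTo h M M) :
    ∃ Z, Z ⊆ M ∧ Z.Nonempty ∧ IsClosed Z ∧ Set.MapsTo h Z Z ∧
      ∀ Z' ⊆ Z, Z'.Nonempty → IsClosed Z' → Set.MapsTo h Z' Z' → Z' = Z := by
  set S : Set (Set α) := {Z | Z.Nonempty ∧ IsClosed Z ∧ Z ⊆ M ∧ Set.MapsTo h Z Z} with hS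
  have hMS : M ∈ S := ⟨hMne, hMcl, Set.Subset.rfl, hMinv⟩
  have hchain : ∀ c ⊆ S, IsChain (· ⊆ ·) c → c.Nonempty → ∃ lb ∈ S, ∀ s ∈ c, lb ⊆ s := by
    intro c hcS hcchain hcne
    haveI : Nonempty ↥c := hcne.coe_sort
    have hdir : DirectedOn (· ⊇ ·) c := by
      intro U hU V hV
      rcases hcchain.total hU hV with hUV | hVU
      · exact ⟨U, hU, Set.Subset.rfl, hUV⟩
      · exact ⟨V, hV, hVU, Set.Subset.rfl⟩
    have hne : (⋂₀ c).Nonempty :=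
      IsCompact.nonempty_sInter_of_directed_nonempty_isCompact_isClosed hdir
        (fun U hU => (hcS hU).1) (fun U hU => (hcS hU).2.1.isCompact)
        (fun U hU => (hcS hU).2.1)
    obtain ⟨U₀, hU₀⟩ := hcne
    refine ⟨⋂₀ c, ⟨hne, isClosed_sInter fun U hU => (hcS hU).2.1,
      (Set.sInter_subset_of_mem hU₀).trans (hcS hU₀).2.2.1, ?_⟩,
      fun s hs => Set.sInter_subset_of_mem hs⟩
    intro y hy
    rw [Set.mem_sInter] at hy ⊢
    exact fun U hU => (hcS hU).2.2.2 (hy U hU)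
  obtain ⟨Z, -, hZS, hZmin⟩ := zorn_superset_nonempty S hchain M hMS
  exact ⟨Z, hZS.2.2.1, hZS.1, hZS.2.1, hZS.2.2.2, fun Z' h1 h2 h3 h4 =>
    Set.Subset.antisymm h1 (hZmin ⟨h2, h3, h1.trans hZS.2.2.1, h4⟩ h1)⟩

lemma isAP_syndetic_pow {g : α → α} (hg : Continuous g) {x : α} (hx : IsAP g x)
    {q : ℕ} (hq : 0 < q) {δ : ℝ} (hδ : 0 < δ) :
    ∃ G : ℕ, ∀ l : ℕ, ∃ i ≤ G, dist ((g^[q])^[l + i] x) x < δ := by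
  set M := closure (Set.range fun n : ℕ => g^[n] x) with hM
  have hxM : x ∈ M := subset_closure ⟨0, rfl⟩
  have hMcl : IsClosed M := isClosed_closure
  have hrinv : Set.MapsTo g (Set.range fun n : ℕ => g^[n] x) (Set.range fun n : ℕ => g^[n] x) := by
    rintro y ⟨n, rfl⟩
    exact ⟨n + 1, Function.iterate_succ_apply' g n x⟩
  have hMinv : Set.MapsTo g M M := hrinv.closure hg
  set h := g^[q] with hh
  have hhc : Continuous h := hg.iterate q
  have hMinvh : Set.MapsTo h M M := hMinv.iterate q
  obtain ⟨Z₀, hZ₀M, hZ₀ne, hZ₀cl, hZ₀inv, hZ₀min⟩ :=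
    exists_minimal_invariant ⟨x, hxM⟩ hMcl hMinvh
  have hZ₀comp : IsCompact Z₀ := hZ₀cl.isCompact
  -- the union W of the images g^[i] '' Z₀, i < q
  set W := ⋃ i ∈ Finset.range q, g^[i] '' Z₀ with hW
  have hWsub : W ⊆ M := by
    intro y hy
    simp only [hW, Set.mem_iUnion, Finset.mem_range] at hy
    obtain ⟨i, hi, z, hz, rfl⟩ := hy
    exact (hMinv.iterate i) (hZ₀M hz)
  have hZ₀W : Z₀ ⊆ W := by
    intro z hz
    simp only [hW, Set.mem_iUnion, Finset.mem_range]
    exact ⟨0, hq, z, hz, rfl⟩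
  have hWcl : IsClosed W := by
    apply Set.Finite.isClosed_biUnion (Finset.range q).finite_toSet
    intro i _
    exact (hZ₀comp.image (hg.iterate i)).isClosed
  have hWinv : Set.MapsTo g W W := by
    intro y hy
    simp only [hW, Set.mem_iUnion, Finset.mem_range] at hy ⊢
    obtain ⟨i, hi, z, hz, rfl⟩ := hy
    have heq : g (g^[i] z) = g^[i + 1] z := (Function.iterate_succ_apply' g i z).symm
    by_cases hiq : i + 1 < q
    · exact ⟨i + 1, hiq, z, hz, heq.symm⟩
    · have hiq' : i + 1 = q := by omega
      refine ⟨0, hq, g^[q] z, hZ₀inv hz, ?_⟩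
      simp only [Function.iterate_zero_apply]
      rw [heq, hiq']
  have hxW : x ∈ W :=
    isAP_mem_closed_invariant hg hx hWsub (hZ₀ne.mono hZ₀W) hWcl hWinv
  -- x lies in some g^[i₀] '' Z₀
  obtain ⟨i₀, hi₀q, hxZA⟩ : ∃ i₀, i₀ < q ∧ x ∈ g^[i₀] '' Z₀ := by
    simp only [hW, Set.mem_iUnion, Finset.mem_range] at hxW
    obtain ⟨i, hi, hmem⟩ := hxW
    exact ⟨i, hi, hmem⟩
  set ZA := g^[i₀] '' Z₀ with hZA
  have hZAcomp : IsCompact ZA := hZ₀comp.image (hg.iterate i₀)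
  have hZAcl : IsClosed ZA := hZAcomp.isClosed
  have hcomm : ∀ (j : ℕ) (z : α), h (g^[j] z) = g^[j] (h z) := by
    intro j z
    simp only [hh, ← Function.iterate_add_apply, add_comm q j]
  have hZAinv : Set.MapsTo h ZA ZA := by
    rintro y ⟨z, hz, rfl⟩
    exact ⟨h z, hZ₀inv hz, (hcomm i₀ z).symm⟩
  -- minimality of ZA
  have hZAmin : ∀ Z'' ⊆ ZA, Z''.Nonempty → IsClosed Z'' → Set.MapsTo h Z'' Z'' → Z'' = ZA := by
    intro Z'' h1 h2 h3 h4
    set V := g^[q - i₀] '' Z'' with hV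
    have hVZ₀ : V ⊆ Z₀ := by
      rintro y ⟨u, hu, rfl⟩
      obtain ⟨z, hz, rfl⟩ := h1 hu
      have : g^[q - i₀] (g^[i₀] z) = h z := by
        rw [← Function.iterate_add_apply, Nat.sub_add_cancel (le_of_lt hi₀q)]
      rw [this]
      exact hZ₀inv hz
    have hVne : V.Nonempty := h2.image _
    have hVcl : IsClosed V := ((h3.isCompact.image (hg.iterate (q - i₀)))).isClosed
    have hVinv : Set.MapsTo h V V := by
      rintro y ⟨u, hu, rfl⟩
      exact ⟨h u, h4 hu, (hcomm (q - i₀) u).symm⟩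
    have hVeq : V = Z₀ := hZ₀min V hVZ₀ hVne hVcl hVinv
    refine Set.Subset.antisymm h1 ?_
    rintro y ⟨z, hz, rfl⟩
    rw [← hVeq] at hz
    obtain ⟨u, hu, rfl⟩ := hz
    have : g^[i₀] (g^[q - i₀] u) = h u := by
      rw [← Function.iterate_add_apply, Nat.add_sub_cancel' (le_of_lt hi₀q)]
    rw [this]
    exact h4 hu
  -- every element of ZA returns close to x under iterates of h
  have hcov : ∀ B ∈ ZA, ∃ j : ℕ, dist (h^[j] B) x < δ := by
    intro B hB
    set Z'' := closure (Set.range fun j : ℕ => h^[j] B) with hZ''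
    have horb : (Set.range fun j : ℕ => h^[j] B) ⊆ ZA := by
      rintro y ⟨j, rfl⟩
      exact hZAinv.iterate j hB
    have h1 : Z'' ⊆ ZA := closure_minimal horb hZAcl
    have h2 : Z''.Nonempty := ⟨B, subset_closure ⟨0, rfl⟩⟩
    have h3 : IsClosed Z'' := isClosed_closure
    have h4 : Set.MapsTo h Z'' Z'' := by
      refine Set.MapsTo.closure ?_ hhc
      rintro y ⟨j, rfl⟩
      exact ⟨j + 1, Function.iterate_succ_apply' h j B⟩
    have hZ''eq : Z'' = ZA := hZAmin Z'' h1 h2 h3 h4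
    have hxZ'' : x ∈ Z'' := hZ''eq ▸ hxZA
    obtain ⟨y, hy, hdy⟩ := Metric.mem_closure_iff.1 hxZ'' δ hδ
    obtain ⟨j, rfl⟩ := hy
    exact ⟨j, by rwa [dist_comm]⟩
  -- finite subcover
  set U : ℕ → Set α := fun j => {B | dist (h^[j] B) x < δ} with hU
  have hUopen : ∀ j, IsOpen (U j) :=
    fun j => isOpen_Iio.preimage ((hhc.iterate j).dist continuous_const)
  have hcover : ZA ⊆ ⋃ j, U j := by
    intro B hB
    obtain ⟨j, hj⟩ := hcov B hB
    exact Set.mem_iUnion.2 ⟨j, hj⟩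
  obtain ⟨T, hT⟩ := hZAcomp.elim_finite_subcover U hUopen hcover
  refine ⟨T.sup id, fun l => ?_⟩
  have hBl : h^[l] x ∈ ZA := hZAinv.iterate l hxZA
  obtain ⟨j, hjT, hjU⟩ : ∃ j ∈ T, h^[l] x ∈ U j := by
    have := hT hBl
    simpa using this
  refine ⟨j, Finset.le_sup (f := id) hjT, ?_⟩
  rw [add_comm l j, Function.iterate_add_apply]
  exact hjU
end GeneralDynamics

section HyperLemmas
variable {X : Type*} [MetricSpace X] [CompactSpace X]

lemma hyper_coe (f : X ≃ₜ X) (A : NonemptyCompacts X) :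
    ((hyper f A : NonemptyCompacts X) : Set X) = f '' (A : Set X) := rfl

lemma hyper_iterate (f : X ≃ₜ X) (n : ℕ) (A : NonemptyCompacts X) :
    (((hyper f)^[n] A : NonemptyCompacts X) : Set X) = (⇑f)^[n] '' (A : Set X) := by
  induction n with
  | zero => simp
  | succ n ih =>
    rw [Function.iterate_succ_apply', hyper_coe, ih, Function.iterate_succ', Set.image_comp]

lemma hyper_edist_ne_top (s t : Set X) (hs : s.Nonempty) (ht : t.Nonempty) :
    EMetric.hausdorffEdist s t ≠ ⊤ := by
  apply Metric.hausdorffEdist_ne_top_of_nonempty_of_bounded hs ht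
  · exact (IsCompact.isBounded (isCompact_univ)).subset (Set.subset_univ s)
  · exact (IsCompact.isBounded (isCompact_univ)).subset (Set.subset_univ t)

lemma continuous_hyper (f : X ≃ₜ X) : Continuous (hyper f) := by
  rw [Metric.continuous_iff]
  intro A ε hε
  obtain ⟨δ, hδpos, hδ⟩ := Metric.uniformContinuous_iff.1
    (CompactSpace.uniformContinuous_of_continuous f.continuous) (ε / 2) (by positivity)
  refine ⟨δ, hδpos, fun B hBA => ?_⟩
  rw [NonemptyCompacts.dist_eq] at hBA ⊢
  have hfin : EMetric.hausdorffEdist (B : Set X) (A : Set X) ≠ ⊤ :=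
    hyper_edist_ne_top _ _ B.nonempty A.nonempty
  have hfin' : EMetric.hausdorffEdist (A : Set X) (B : Set X) ≠ ⊤ := by
    unfold EMetric.hausdorffEdist at hfin ⊢
    rwa [EMetric.hausdorffEdist_comm]
  have key : hausdorffDist (f '' (B : Set X)) (f '' (A : Set X)) ≤ ε / 2 := by
    apply Metric.hausdorffDist_le_of_mem_dist (by positivity)
    · rintro _ ⟨b, hb, rfl⟩
      obtain ⟨a, ha, hab⟩ := Metric.exists_dist_lt_of_hausdorffDist_lt hb hBA hfin
      exact ⟨f a, Set.mem_image_of_mem _ ha, le_of_lt (hδ hab)⟩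
    · rintro _ ⟨a, ha, rfl⟩
      obtain ⟨b, hb, hba⟩ := Metric.exists_dist_lt_of_hausdorffDist_lt ha
        (by rwa [Metric.hausdorffDist_comm]) hfin'
      exact ⟨f b, Set.mem_image_of_mem _ hb, le_of_lt (hδ hba)⟩
  calc hausdorffDist ((hyper f B : NonemptyCompacts X) : Set X)
        ((hyper f A : NonemptyCompacts X) : Set X)
      = hausdorffDist (f '' (B : Set X)) (f '' (A : Set X)) := by rw [hyper_coe, hyper_coe]
    _ ≤ ε / 2 := key
    _ < ε := by linarith

lemma free_half (f : X ≃ₜ X) (hper : ∀ x : X, ∃ n > 0, (⇑f)^[n] x = x)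
    (A : NonemptyCompacts X) {ε : ℝ} (hε : 0 < ε) :
    ∃ N₁ : ℕ, 0 < N₁ ∧ ∀ t : ℕ, N₁ ∣ t → ∀ b ∈ (A : Set X),
      ∃ c ∈ (⇑f)^[t] '' (A : Set X), dist b c ≤ ε := by
  obtain ⟨F, hFA, hFfin, hFcov⟩ := A.isCompact.finite_cover_balls hε
  choose! p hppos hpfix using hper
  refine ⟨∏ x ∈ hFfin.toFinset, p x, Finset.prod_pos fun x _ => hppos x, ?_⟩
  intro t ht b hb
  obtain ⟨x, hxF, hbx⟩ : ∃ x ∈ F, b ∈ Metric.ball x ε := by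
    have := hFcov hb
    simp only [Set.mem_iUnion, exists_prop] at this
    exact this
  have hdvd : p x ∣ t := dvd_trans (Finset.dvd_prod_of_mem p (hFfin.mem_toFinset.2 hxF)) ht
  obtain ⟨k, rfl⟩ := hdvd
  have hfix : (⇑f)^[p x * k] x = x := by
    rw [Function.iterate_mul]
    exact Function.IsFixedPt.iterate (hpfix x) k
  exact ⟨x, ⟨x, hFA hxF, hfix⟩, le_of_lt (by rwa [Metric.mem_ball] at hbx)⟩

end HyperLemmas

end AuxiliaryLemmas

theorem stmt11 {X : Type*} [MetricSpace X] [CompactSpace X]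
    (f : X ≃ₜ X) (hper : ∀ x : X, ∃ n > 0, (⇑f)^[n] x = x) :
    {A : NonemptyCompacts X | IsAP (hyper f) A} =
      {A : NonemptyCompacts X | IsUnifRec (hyper f) A} := by
  ext A
  simp only [Set.mem_setOf_eq]
  constructor
  · -- hard direction: AP → UnifRec
    intro hAP ε hε
    by_contra hcon
    push_neg at hcon
    obtain ⟨N₁, hN₁pos, hN₁⟩ := free_half f hper A (show (0:ℝ) < ε / 2 by positivity)
    have hgc : Continuous (hyper f) := continuous_hyper f
    have hdef : ∀ m : ℕ, ∃ n : ℕ, N₁ ∣ n ∧ m.factorial ∣ n ∧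
        ∃ w ∈ (⇑f)^[n] '' (A : Set X), ε / 2 ≤ infDist w (A : Set X) := by
      intro m
      obtain ⟨k, hk⟩ := hcon (N₁ * m.factorial) (Nat.mul_pos hN₁pos m.factorial_pos)
      refine ⟨k * (N₁ * m.factorial), ⟨k * m.factorial, by ring⟩, ⟨k * N₁, by ring⟩, ?_⟩
      by_contra hno
      push_neg at hno
      have hle : hausdorffDist ((⇑f)^[k * (N₁ * m.factorial)] '' (A : Set X)) (A : Set X)
          ≤ ε / 2 := by
        apply Metric.hausdorffDist_le_of_infDist (by positivity)
        · exact fun w hw => le_of_lt (hno w hw)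
        · intro b hb
          obtain ⟨c, hc, hbc⟩ := hN₁ (k * (N₁ * m.factorial)) ⟨k * m.factorial, by ring⟩ b hb
          exact le_trans (Metric.infDist_le_dist_of_mem hc) hbc
      have hcontr : dist ((hyper f)^[k * (N₁ * m.factorial)] A) A ≤ ε / 2 := by
        rw [NonemptyCompacts.dist_eq, hyper_iterate]
        exact hle
      linarith [hk]
    choose n hn1 hn2 w hwmem hwdef using hdef
    obtain ⟨z, -, φ, hφmono, hφtend⟩ :=
      isCompact_univ.tendsto_subseq (fun m => Set.mem_univ (w m))
    have hzdef : ε / 2 ≤ infDist z (A : Set X) :=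
      ge_of_tendsto (((continuous_infDist_pt (A : Set X)).continuousAt).tendsto.comp hφtend)
        (Filter.Eventually.of_forall fun j => hwdef (φ j))
    obtain ⟨q, hqpos, hqfix⟩ := hper z
    obtain ⟨G, hG⟩ := isAP_syndetic_pow hgc hAP hqpos (show (0:ℝ) < ε / 8 by positivity)
    have hsynd : ∀ j : ℕ, ∃ i ≤ G,
        dist ((hyper f)^[n (φ (j + q)) + q * i] A) A < ε / 8 := by
      intro j
      have hqm : q ∣ n (φ (j + q)) :=
        dvd_trans (Nat.dvd_factorial hqpos (le_trans (Nat.le_add_left q j) hφmono.le_apply))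
          (hn2 (φ (j + q)))
      obtain ⟨l, hl⟩ := hqm
      obtain ⟨i, hiG, hdist⟩ := hG l
      refine ⟨i, hiG, ?_⟩
      have harith : n (φ (j + q)) + q * i = q * (l + i) := by rw [hl]; ring
      rw [harith, Function.iterate_mul]
      exact hdist
    obtain ⟨i, hiG, hfreq⟩ := pigeon_aux G _ hsynd
    have hzfix : (⇑f)^[q * i] z = z := by
      rw [Function.iterate_mul]
      exact Function.IsFixedPt.iterate hqfix i
    have hcont : Filter.Tendsto
        (fun j : ℕ => infDist ((⇑f)^[q * i] (w (φ (j + q)))) (A : Set X))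
        Filter.atTop (nhds (infDist ((⇑f)^[q * i] z) (A : Set X))) := by
      have h1 : Filter.Tendsto (fun j : ℕ => w (φ (j + q))) Filter.atTop (nhds z) :=
        hφtend.comp (Filter.tendsto_add_atTop_nat q)
      exact (((continuous_infDist_pt (A : Set X)).comp
        (f.continuous.iterate (q * i))).continuousAt).tendsto.comp h1
    rw [hzfix] at hcont
    obtain ⟨J, hJ⟩ := (Metric.tendsto_atTop.1 hcont) (ε / 8) (by positivity)
    obtain ⟨j, hjJ, hjdist⟩ := hfreq J
    have hymem' : (⇑f)^[q * i] (w (φ (j + q)))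
        ∈ (⇑f)^[n (φ (j + q)) + q * i] '' (A : Set X) := by
      obtain ⟨a, ha, hwa⟩ := hwmem (φ (j + q))
      refine ⟨a, ha, ?_⟩
      rw [add_comm, Function.iterate_add_apply, hwa]
    have hclose : infDist ((⇑f)^[q * i] (w (φ (j + q)))) (A : Set X) < ε / 8 := by
      have hdist' : hausdorffDist ((⇑f)^[n (φ (j + q)) + q * i] '' (A : Set X)) (A : Set X)
          < ε / 8 := by
        have h := hjdist
        rwa [NonemptyCompacts.dist_eq, hyper_iterate] at h
      have hfin : EMetric.hausdorffEdist
          ((⇑f)^[n (φ (j + q)) + q * i] '' (A : Set X)) (A : Set X) ≠ ⊤ :=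
        hyper_edist_ne_top _ _ (A.nonempty.image _) A.nonempty
      obtain ⟨b, hbA, hyb⟩ := Metric.exists_dist_lt_of_hausdorffDist_lt hymem' hdist' hfin
      exact lt_of_le_of_lt (Metric.infDist_le_dist_of_mem hbA) hyb
    have happ := hJ j hjJ
    rw [Real.dist_eq] at happ
    have hsub : infDist z (A : Set X)
        - infDist ((⇑f)^[q * i] (w (φ (j + q)))) (A : Set X) < ε / 8 :=
      (abs_sub_lt_iff.1 happ).2
    linarith
  · -- easy direction: UnifRec → AP
    intro hUR ε hε
    obtain ⟨N, hNpos, hN⟩ := hUR ε hε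
    refine ⟨N, fun n => ?_⟩
    by_cases h : n % N = 0
    · refine ⟨0, hNpos, ?_⟩
      obtain ⟨k, hk⟩ := Nat.dvd_of_mod_eq_zero h
      rw [add_zero, hk, mul_comm]
      exact hN k
    · have hr : n % N < N := Nat.mod_lt _ hNpos
      have h1 : N - n % N < N := Nat.sub_lt hNpos (Nat.pos_of_ne_zero h)
      refine ⟨N - n % N, h1, ?_⟩
      have h4 : n % N + (N - n % N) = N := Nat.add_sub_cancel' (le_of_lt hr)
      have hnn : N * (n / N) + n % N = n := Nat.div_add_mod n N
      have key : n + (N - n % N) = (n / N + 1) * N := by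
        calc n + (N - n % N) = N * (n / N) + n % N + (N - n % N) := by rw [hnn]
          _ = N * (n / N) + (n % N + (N - n % N)) := by rw [add_assoc]
          _ = N * (n / N) + N := by rw [h4]
          _ = (n / N + 1) * N := by ring
      rw [key]
      exact hN (n / N + 1)
end

section
/- Let f : X → X be a pointwise periodic homeomorphism of a compact metric space. If A, B ∈ 2^X are uniformly recurrent points of 2^f with A ∩ B ≠ ∅, then A ∩ B is a uniformly recurrent point of 2^f. That is, the class of uniformly recurrent closed sets under 2^f is stable under (nonempty) finite intersection. -/
/-!
By compactness of `A ×ˢ B`, a point `δ`-close to both `A` and `B` is `ε`-close to `A ∩ B`, so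
`fⁿ(A ∩ B)` lies near `A ∩ B` whenever `fⁿ(A)` and `fⁿ(B)` are `δ`-close to `A` and `B`; taking
`n` a common multiple of the return times of `A` and `B` arranges this. Conversely `A ∩ B` lies
near `fⁿ(A ∩ B)` as soon as `fⁿ` fixes a finite `ε`-net of `A ∩ B`, which pointwise periodicity
arranges by also making `n` a multiple of the periods of the net points.
-/

open TopologicalSpace Metric Set Filter

open Function

section

variable {X : Type*} [MetricSpace X]

theorem IsCompact.exists_thickening_inter_subset {A B : Set X} (hA : IsCompact A)
    (hB : IsCompact B) {ε : ℝ} (hε : 0 < ε) :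
    ∃ δ > 0, thickening δ A ∩ thickening δ B ⊆ thickening ε (A ∩ B) := by
  -- `A ×ˢ B` meets the diagonal only over `A ∩ B`, so it has a uniform neighbourhood inside
  -- the open set of pairs that are either off the diagonal or near `A ∩ B`.
  set U : Set (X × X) := (diagonal X)ᶜ ∪ Prod.fst ⁻¹' thickening ε (A ∩ B)
  have hU : IsOpen U :=
    isClosed_diagonal.isOpen_compl.union (isOpen_thickening.preimage continuous_fst)
  have hABU : A ×ˢ B ⊆ U := by
    rintro ⟨a, b⟩ ⟨ha, hb⟩
    by_cases hab : a = b
    · subst hab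
      exact Or.inr (self_subset_thickening hε _ ⟨ha, hb⟩)
    · exact Or.inl hab
  obtain ⟨δ, hδ, hδU⟩ := (hA.prod hB).exists_thickening_subset_open hU hABU
  refine ⟨δ, hδ, fun y ⟨hyA, hyB⟩ => ?_⟩
  obtain ⟨a, ha, hya⟩ := mem_thickening_iff.1 hyA
  obtain ⟨b, hb, hyb⟩ := mem_thickening_iff.1 hyB
  have hyy : (y, y) ∈ thickening δ (A ×ˢ B) :=
    mem_thickening_iff.2 ⟨(a, b), ⟨ha, hb⟩, by rw [Prod.dist_eq]; exact max_lt hya hyb⟩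
  exact (hδU hyy).resolve_left (not_not.2 rfl)

theorem IsCompact.exists_finite_subset_thickening {s : Set X} (hs : IsCompact s) {ε : ℝ}
    (hε : 0 < ε) : ∃ t ⊆ s, t.Finite ∧ s ⊆ thickening ε t := by
  simpa only [thickening_eq_biUnion_ball] using hs.finite_cover_balls hε

theorem hausdorffDist_le_of_subset_thickening {s t : Set X} {r : ℝ} (hr : 0 ≤ r)
    (hst : s ⊆ thickening r t) (hts : t ⊆ thickening r s) : hausdorffDist s t ≤ r := by
  have hmem : ∀ {u v : Set X}, u ⊆ thickening r v → ∀ x ∈ u, ∃ y ∈ v, dist x y ≤ r :=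
    fun huv x hx ↦
      let ⟨y, hy, hxy⟩ := mem_thickening_iff.1 (huv hx)
      ⟨y, hy, hxy.le⟩
  exact hausdorffDist_le_of_mem_dist hr (hmem hst) (hmem hts)

theorem NonemptyCompacts.subset_thickening_of_dist_lt {K L : NonemptyCompacts X} {δ : ℝ}
    (h : dist K L < δ) : (K : Set X) ⊆ thickening δ L := fun _ hx =>
  mem_thickening_iff.2 (exists_dist_lt_of_hausdorffDist_lt hx h (edist_ne_top K L))

theorem coe_hyper_iterate (f : X ≃ₜ X) (n : ℕ) (A : NonemptyCompacts X) :
    (((hyper f)^[n] A : NonemptyCompacts X) : Set X) = f^[n] '' A := by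
  induction n with
  | zero => simp
  | succ n ih =>
    rw [iterate_succ', comp_apply, iterate_succ', image_comp, ← ih]
    rfl

theorem IsUnifRec.exists_image_iterate_subset_thickening {f : X ≃ₜ X} {A : NonemptyCompacts X}
    (hA : IsUnifRec (hyper f) A) {δ : ℝ} (hδ : 0 < δ) :
    ∃ N > 0, ∀ n, N ∣ n → f^[n] '' A ⊆ thickening δ A := by
  obtain ⟨N, hN, hAN⟩ := hA δ hδ
  refine ⟨N, hN, ?_⟩
  rintro _ ⟨k, rfl⟩
  rw [← coe_hyper_iterate, mul_comm]
  exact NonemptyCompacts.subset_thickening_of_dist_lt (hAN k)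

end

theorem Set.Finite.exists_pos_forall_isPeriodicPt {α : Type*} {g : α → α} {t : Set α}
    (ht : t.Finite) (hper : ∀ x ∈ t, ∃ n > 0, IsPeriodicPt g n x) :
    ∃ L > 0, ∀ x ∈ t, IsPeriodicPt g L x := by
  choose! p hp hgp using hper
  refine ⟨∏ x ∈ ht.toFinset, p x, Finset.prod_pos fun x hx => hp x (ht.mem_toFinset.1 hx),
    fun x hx => (hgp x hx).trans_dvd (Finset.dvd_prod_of_mem p (ht.mem_toFinset.2 hx))⟩

theorem stmt12_general {X : Type*} [MetricSpace X]
    (f : X ≃ₜ X) (hper : ∀ x : X, ∃ n > 0, (⇑f)^[n] x = x)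
    (A B : NonemptyCompacts X)
    (hA : IsUnifRec (hyper f) A) (hB : IsUnifRec (hyper f) B)
    (C : NonemptyCompacts X) (hC : (C : Set X) = (A : Set X) ∩ (B : Set X)) :
    IsUnifRec (hyper f) C := by
  intro ε hε
  obtain ⟨δ, hδ, hABC⟩ := A.isCompact.exists_thickening_inter_subset B.isCompact (half_pos hε)
  obtain ⟨N₁, hN₁, hAN⟩ := hA.exists_image_iterate_subset_thickening hδ
  obtain ⟨N₂, hN₂, hBN⟩ := hB.exists_image_iterate_subset_thickening hδ
  obtain ⟨t, htC, ht, hCt⟩ := C.isCompact.exists_finite_subset_thickening (half_pos hε)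
  obtain ⟨L, hL, htL⟩ := ht.exists_pos_forall_isPeriodicPt fun x _ => hper x
  refine ⟨N₁ * N₂ * L, by positivity, fun k => ?_⟩
  rw [NonemptyCompacts.dist_eq, coe_hyper_iterate]
  refine (hausdorffDist_le_of_subset_thickening (half_pos hε).le ?_ ?_).trans_lt (half_lt_self hε)
  · rw [hC]
    exact (image_inter_subset _ _ _).trans <| (inter_subset_inter
      (hAN _ ⟨k * (N₂ * L), by ring⟩) (hBN _ ⟨k * (N₁ * L), by ring⟩)).trans hABC
  · have hfix : ∀ x ∈ t, f^[k * (N₁ * N₂ * L)] x = x := fun x hx =>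
      (htL x hx).trans_dvd ⟨k * (N₁ * N₂), by ring⟩
    exact hCt.trans (thickening_subset_of_subset _ fun x hx => ⟨x, htC hx, hfix x hx⟩)

theorem stmt12 {X : Type*} [MetricSpace X] [CompactSpace X]
    (f : X ≃ₜ X) (hper : ∀ x : X, ∃ n > 0, (⇑f)^[n] x = x)
    (A B : NonemptyCompacts X)
    (hA : IsUnifRec (hyper f) A) (hB : IsUnifRec (hyper f) B)
    (C : NonemptyCompacts X) (hC : (C : Set X) = (A : Set X) ∩ (B : Set X)) :
    IsUnifRec (hyper f) C :=
  stmt12_general f hper A B hA hB C hC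
end
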